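/- Let G = (X, E, δ, X₀) be an NFA with observable events E_o, secret states X_S, observer G_obs, secret-involved projected automaton G_SP, and verifier G_v constructed from G_obs and G_SP. For every ω ∈ L(G_v), writing f_v(x_v,0, ω) = (q, r): q = f_obs(x_obs,0, ω) and r = {x ∈ X : ∃ x₀ ∈ X₀ ∩ X_NS, ∃ s ∈ E* with P(s) = ω, there is a non-secret run of G from x₀ to x over s}. -/
import Mathlib


namespace Opacity

variable {X E : Type*}

/-- Extension of a nondeterministic transition function `δ : X × E → Set X`
to strings: `dStr δ x ε = {x}` and `dStr δ x (e·s) = ⋃ x' ∈ δ x e, dStr δ x' s`. -/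
def dStr (δ : X → E → Set X) : X → List E → Set X
  | x, [] => {x}
  | x, e :: s => ⋃ x' ∈ δ x e, dStr δ x' s

/-- Extension of the transition function to sets of states. -/
def dSet (δ : X → E → Set X) (Q : Set X) (s : List E) : Set X :=
  ⋃ x ∈ Q, dStr δ x s

/-- The natural projection `P : E* → E_o*`, deleting all unobservable events. -/
noncomputable def proj (Eo : Set E) : List E → List E
  | [] => []
  | e :: s => @ite _ (e ∈ Eo) (Classical.propDecidable _) (e :: proj Eo s) (proj Eo s)

/-- Unobservable reach `UR(Q)`. -/
def UR (δ : X → E → Set X) (Eo : Set E) (Q : Set X) : Set X :=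
  {x' | ∃ x ∈ Q, ∃ s : List E, x' ∈ dStr δ x s ∧ proj Eo s = []}

/-- Observable reach `R(Q, e_o)` via one observable event. -/
def oR (δ : X → E → Set X) (Eo : Set E) (Q : Set X) (eo : E) : Set X :=
  {x | ∃ x' ∈ Q, ∃ s : List E, x ∈ dStr δ x' s ∧ proj Eo s = [eo]}

/-- The observer's transition function `f_obs(q, e_o) = R(q, e_o)`, extended to
observation sequences.  It is totalized: since `R(∅, e_o) = ∅`, the partial
function `f_obs` is defined on `(q, w)` exactly when `fobs δ Eo q w` is nonempty. -/
def fobs (δ : X → E → Set X) (Eo : Set E) : Set X → List E → Set X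
  | q, [] => q
  | q, e :: w => fobs δ Eo (oR δ Eo q e) w

/-- The state set `X_obs` of the observer: the (nonempty) subsets of `X`
reachable from the initial observer state `UR(X₀)`. -/
def Xobs (δ : X → E → Set X) (Eo : Set E) (X0 : Set X) : Set (Set X) :=
  {q | ∃ w : List E, fobs δ Eo (UR δ Eo X0) w = q ∧ q.Nonempty}

/-- `y` is a run of the automaton from `x` over the string `s`:
`y 0 = x` and `y (j+1) ∈ δ (y j) (s[j])` for all `j < |s|`. -/
def IsRun (δ : X → E → Set X) (x : X) (s : List E) (y : ℕ → X) : Prop :=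
  y 0 = x ∧ ∀ j : Fin s.length, y (j.val + 1) ∈ δ (y j.val) (s.get j)

/-- There is a non-secret run of the automaton from `x` to `x'` over `s`
(all states of the run except possibly the first one are non-secret). -/
def NonSecretRunTo (δ : X → E → Set X) (XS : Set X) (x : X) (s : List E) (x' : X) : Prop :=
  ∃ y : ℕ → X, IsRun δ x s y ∧ (∀ j, 1 ≤ j → j ≤ s.length → y j ∉ XS) ∧ y s.length = x'

/-- `K`-step weak opacity. -/
def KStepWeakOpaque (δ : X → E → Set X) (Eo : Set E) (X0 XS : Set X) (K : ℕ) : Prop :=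
  ∀ x0 ∈ X0, ∀ s t : List E,
    (dStr δ x0 (s ++ t)).Nonempty →
    (dStr δ x0 s ∩ XS).Nonempty →
    (dSet δ (dStr δ x0 s ∩ XS) t).Nonempty →
    (proj Eo t).length ≤ K →
    ∃ x0' ∈ X0, ∃ s' t' : List E,
      (dStr δ x0' (s' ++ t')).Nonempty ∧
      proj Eo s' = proj Eo s ∧ proj Eo t' = proj Eo t ∧
      (dStr δ x0' s' ∩ XSᶜ).Nonempty ∧
      (dSet δ (dStr δ x0' s' ∩ XSᶜ) t').Nonempty

/-- Infinite-step weak opacity. -/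
def InfStepWeakOpaque (δ : X → E → Set X) (Eo : Set E) (X0 XS : Set X) : Prop :=
  ∀ x0 ∈ X0, ∀ s t : List E,
    (dStr δ x0 (s ++ t)).Nonempty →
    (dStr δ x0 s ∩ XS).Nonempty →
    (dSet δ (dStr δ x0 s ∩ XS) t).Nonempty →
    ∃ x0' ∈ X0, ∃ s' t' : List E,
      (dStr δ x0' (s' ++ t')).Nonempty ∧
      proj Eo s' = proj Eo s ∧ proj Eo t' = proj Eo t ∧
      (dStr δ x0' s' ∩ XSᶜ).Nonempty ∧
      (dSet δ (dStr δ x0' s' ∩ XSᶜ) t').Nonempty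

/-- `K`-step strong opacity. -/
def KStepStrongOpaque (δ : X → E → Set X) (Eo : Set E) (X0 XS : Set X) (K : ℕ) : Prop :=
  ∀ x0 ∈ X0, ∀ s t : List E,
    (dStr δ x0 (s ++ t)).Nonempty →
    (dStr δ x0 s ∩ XS).Nonempty →
    (dSet δ (dStr δ x0 s ∩ XS) t).Nonempty →
    (proj Eo t).length ≤ K →
    ∃ x0' ∈ X0, ∃ ω : List E,
      (dStr δ x0' ω).Nonempty ∧
      proj Eo ω = proj Eo (s ++ t) ∧
      ∃ y : ℕ → X, IsRun δ x0' ω y ∧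
        ∀ j ≤ ω.length,
          (proj Eo ω).length - (proj Eo (ω.take j)).length ≤ K → y j ∉ XS

/-- Infinite-step strong opacity. -/
def InfStepStrongOpaque (δ : X → E → Set X) (Eo : Set E) (X0 XS : Set X) : Prop :=
  ∀ x0 ∈ X0, ∀ s t : List E,
    (dStr δ x0 (s ++ t)).Nonempty →
    (dStr δ x0 s ∩ XS).Nonempty →
    (dSet δ (dStr δ x0 s ∩ XS) t).Nonempty →
    ∃ x0' ∈ X0 ∩ XSᶜ, ∃ ω : List E,
      (dStr δ x0' ω).Nonempty ∧
      proj Eo ω = proj Eo (s ++ t) ∧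
      ∃ y : ℕ → X, IsRun δ x0' ω y ∧ ∀ j ≤ ω.length, y j ∉ XS

/-- Child of a node `(x₁, x₂)` of a state-tree associated with observer state `q'`,
via observable event `e`. -/
def treeChild (δ : X → E → Set X) (Eo : Set E) (q' : Set X) (n : Set X × Set X)
    (e : E) : Set X × Set X :=
  ({x ∈ oR δ Eo q' e | ∃ x' ∈ n.1, x ∈ oR δ Eo {x'} e},
   {x ∈ oR δ Eo q' e | ∃ x' ∈ n.2, x ∈ oR δ Eo {x'} e})

/-- Descend in a state-tree from node `n` (associated with observer state `q'`)
along the observation sequence `w`. -/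
def treeNodeAux (δ : X → E → Set X) (Eo : Set E) :
    Set X → Set X × Set X → List E → Set X × Set X
  | _, n, [] => n
  | q', n, e :: w => treeNodeAux δ Eo (oR δ Eo q' e) (treeChild δ Eo q' n e) w

/-- The node of the state-tree rooted at observer state `q` reached from the
root `(q ∩ X_S, q ∩ X_NS)` along the observation sequence `w`. -/
def treeNode (δ : X → E → Set X) (Eo : Set E) (XS : Set X) (q : Set X)
    (w : List E) : Set X × Set X :=
  treeNodeAux δ Eo q (q ∩ XS, q ∩ XSᶜ) w

/-- `X_st`: all nodes of the depth-`K` state-trees rooted at observer states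
intersecting the secret states. -/
def Xst (δ : X → E → Set X) (Eo : Set E) (X0 XS : Set X) (K : ℕ) :
    Set (Set X × Set X) :=
  {n | ∃ q ∈ Xobs δ Eo X0, (q ∩ XS).Nonempty ∧
    ∃ w : List E, w.length ≤ K ∧ (fobs δ Eo q w).Nonempty ∧ treeNode δ Eo XS q w = n}

/-- Initial states of the secret-involved projected automaton.  A state of
`G_SP` is a pair `(x, b)` where `b = false` encodes the tag `N` and `b = true`
encodes the tag `Y`. -/
def SPinit (δ : X → E → Set X) (Eo : Set E) (X0 XS : Set X) : Set (X × Bool) :=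
  {p | p.1 ∈ UR δ Eo X0 ∧
    (p.2 = false ↔
      ∃ x0 ∈ X0 ∩ XSᶜ, ∃ s : List E, proj Eo s = [] ∧ NonSecretRunTo δ XS x0 s p.1)}

/-- Transition relation of the secret-involved projected automaton. -/
def SPtrans (δ : X → E → Set X) (Eo : Set E) (XS : Set X) (p : X × Bool) (e : E) :
    Set (X × Bool) :=
  {p' | p'.1 ∈ oR δ Eo {p.1} e ∧
    ((p.1 ∉ XS ∧
        (p'.2 = false ↔ ∃ s : List E, proj Eo s = [e] ∧ NonSecretRunTo δ XS p.1 s p'.1)) ∨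
     (p.1 ∈ XS ∧ p.2 = true ∧ p'.2 = true))}

/-- `X_SP`: states of the secret-involved projected automaton reachable from
its initial states. -/
def XSP (δ : X → E → Set X) (Eo : Set E) (X0 XS : Set X) : Set (X × Bool) :=
  {p | ∃ p0 ∈ SPinit δ Eo X0 XS, ∃ w : List E, p ∈ dStr (SPtrans δ Eo XS) p0 w}

/-- Child of a node `(x₁, x₂)` of a secret-unvisited state-tree associated with
observer state `q'`, via observable event `e`. -/
def sstChild (δ : X → E → Set X) (Eo : Set E) (XS : Set X) (q' : Set X)
    (n : Set X × Set X) (e : E) : Set X × Set X :=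
  (oR δ Eo q' e,
   {x ∈ oR δ Eo q' e | ∃ x' ∈ n.2,
      x ∈ oR δ Eo {x'} e ∧ (x, false) ∈ SPtrans δ Eo XS (x', false) e})

/-- Descend in a secret-unvisited state-tree from node `n` (associated with
observer state `q'`) along the observation sequence `w`. -/
def sstNodeAux (δ : X → E → Set X) (Eo : Set E) (XS : Set X) :
    Set X → Set X × Set X → List E → Set X × Set X
  | _, n, [] => n
  | q', n, e :: w => sstNodeAux δ Eo XS (oR δ Eo q' e) (sstChild δ Eo XS q' n e) w

/-- The node of the secret-unvisited state-tree (SST) rooted at observer state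
`q` reached from the root `(q, {x ∈ q ∩ X_NS : x_N ∈ X_SP})` along the
observation sequence `w`. -/
def sstNode (δ : X → E → Set X) (Eo : Set E) (X0 XS : Set X) (q : Set X)
    (w : List E) : Set X × Set X :=
  sstNodeAux δ Eo XS q
    (q, {x | x ∈ q ∧ x ∉ XS ∧ (x, false) ∈ XSP δ Eo X0 XS}) w

/-- `X_st^G`: all nodes of the depth-`K` SSTs rooted at observer states
intersecting the secret states. -/
def XstSST (δ : X → E → Set X) (Eo : Set E) (X0 XS : Set X) (K : ℕ) :
    Set (Set X × Set X) :=
  {n | ∃ q ∈ Xobs δ Eo X0, (q ∩ XS).Nonempty ∧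
    ∃ w : List E, w.length ≤ K ∧ (fobs δ Eo q w).Nonempty ∧ sstNode δ Eo X0 XS q w = n}

/-- Initial state of the verifier. -/
def vInit (δ : X → E → Set X) (Eo : Set E) (X0 XS : Set X) : Set X × Set X :=
  (UR δ Eo X0, {x ∈ UR δ Eo X0 | (x, false) ∈ SPinit δ Eo X0 XS})

/-- Transition function of the verifier, extended to observation sequences
(totalized: the verifier step is defined exactly when the corresponding
observer step is, i.e. exactly when the first component stays nonempty). -/
def fv (δ : X → E → Set X) (Eo : Set E) (XS : Set X) :
    Set X × Set X → List E → Set X × Set X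
  | v, [] => v
  | v, e :: w => fv δ Eo XS
      (oR δ Eo v.1 e,
       {x' ∈ oR δ Eo v.1 e | ∃ x ∈ v.2, (x', false) ∈ SPtrans δ Eo XS (x, false) e}) w

/-- `X_v`: the verifier states reachable from the initial verifier state. -/
def Xv (δ : X → E → Set X) (Eo : Set E) (X0 XS : Set X) : Set (Set X × Set X) :=
  {v | ∃ w : List E, fv δ Eo XS (vInit δ Eo X0 XS) w = v ∧ v.1.Nonempty}

end Opacity

open Opacity

namespace Opacity

section Aux
variable (δ : X → E → Set X) (Eo : Set E) (XS : Set X)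

lemma proj_append (s t : List E) : proj Eo (s ++ t) = proj Eo s ++ proj Eo t := by
  induction s with
  | nil => simp [proj]
  | cons e s ih => simp only [List.cons_append, proj, ih]; split <;> simp [ih]

lemma proj_eq_cons : ∀ {s : List E} {e : E} {w : List E}, proj Eo s = e :: w →
    ∃ a b, s = a ++ e :: b ∧ proj Eo a = [] ∧ e ∈ Eo ∧ proj Eo b = w := by
  intro s
  induction s with
  | nil => intro e w h; simp [proj] at h
  | cons c s ih =>
    intro e w h
    by_cases hc : c ∈ Eo
    · rw [proj, if_pos hc] at h
      obtain ⟨rfl, rfl⟩ : c = e ∧ proj Eo s = w := by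
        simpa using h
      exact ⟨[], s, by simp, by simp [proj], hc, rfl⟩
    · rw [proj, if_neg hc] at h
      obtain ⟨a, b, rfl, ha, he, hb⟩ := ih h
      exact ⟨c :: a, b, rfl, by simp [proj, hc, ha], he, hb⟩

lemma run_mem_dStr : ∀ (s : List E) (x : X) (y : ℕ → X), IsRun δ x s y →
    y s.length ∈ dStr δ x s := by
  intro s
  induction s with
  | nil => intro x y h; simp [dStr, h.1]
  | cons e s ih =>
    intro x y h
    have h1 : y 1 ∈ δ x e := by
      have := h.2 ⟨0, by simp⟩
      simpa [h.1] using this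
    have h2 : IsRun δ (y 1) s (fun j => y (j + 1)) := by
      refine ⟨rfl, fun j => ?_⟩
      have := h.2 ⟨j.val + 1, by simpa using Nat.succ_lt_succ j.isLt⟩
      simpa using this
    have := ih (y 1) (fun j => y (j + 1)) h2
    simp only [dStr, Set.mem_iUnion]
    exact ⟨y 1, h1, by simpa [List.length_cons] using this⟩

lemma nsrt_refl (x : X) : NonSecretRunTo δ XS x [] x :=
  ⟨fun _ => x, ⟨rfl, fun j => absurd j.isLt (by simp)⟩, fun j h1 h2 => by simp at h2; omega, rfl⟩

lemma nsrt_mem_dStr {x x' : X} {s : List E} (h : NonSecretRunTo δ XS x s x') :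
    x' ∈ dStr δ x s := by
  obtain ⟨y, hy, -, he⟩ := h
  rw [← he]; exact run_mem_dStr δ s x y hy

lemma nsrt_append {x x' x'' : X} {s t : List E}
    (h1 : NonSecretRunTo δ XS x s x') (h2 : NonSecretRunTo δ XS x' t x'') :
    NonSecretRunTo δ XS x (s ++ t) x'' := by
  obtain ⟨y, ⟨hy0, hyr⟩, hyn, hye⟩ := h1
  obtain ⟨z, ⟨hz0, hzr⟩, hzn, hze⟩ := h2
  refine ⟨fun j => if j ≤ s.length then y j else z (j - s.length), ⟨by simp [hy0], ?_⟩, ?_, ?_⟩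
  · intro j
    have hj := j.isLt
    simp only [List.length_append] at hj
    beta_reduce
    by_cases hc1 : j.val + 1 ≤ s.length
    · rw [if_pos hc1, if_pos (by omega)]
      have hget : (s ++ t).get j = s.get ⟨j.val, by omega⟩ := by
        simp only [List.get_eq_getElem]
        exact List.getElem_append_left (by omega)
      rw [hget]
      exact hyr ⟨j.val, by omega⟩
    · by_cases hc2 : j.val ≤ s.length
      · have hj' : j.val = s.length := by omega
        rw [if_neg hc1, if_pos hc2]
        have ht : 0 < t.length := by omega
        have hget : (s ++ t).get j = t.get ⟨0, ht⟩ := by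
          simp only [List.get_eq_getElem]
          rw [List.getElem_append_right (by omega)]
          simp [hj']
        rw [hget, hj']
        have := hzr ⟨0, ht⟩
        simpa [hz0, hye, Nat.sub_self] using this
      · rw [if_neg hc1, if_neg hc2]
        have hget : (s ++ t).get j = t.get ⟨j.val - s.length, by omega⟩ := by
          simp only [List.get_eq_getElem]
          exact List.getElem_append_right (by omega)
        rw [hget]
        have := hzr ⟨j.val - s.length, by omega⟩
        have e1 : j.val + 1 - s.length = (j.val - s.length) + 1 := by omega
        rw [e1]
        exact this
  · intro j hj1 hj2
    simp only [List.length_append] at hj2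
    beta_reduce
    by_cases hc : j ≤ s.length
    · rw [if_pos hc]; exact hyn j hj1 hc
    · rw [if_neg hc]; exact hzn (j - s.length) (by omega) (by omega)
  · simp only [List.length_append]
    beta_reduce
    by_cases ht : t.length = 0
    · rw [if_pos (by omega)]
      have : t = [] := List.length_eq_zero_iff.mp ht
      subst this
      simp only [List.length_nil] at hze
      rw [ht, Nat.add_zero, hye, ← hz0, hze]
    · rw [if_neg (by omega), Nat.add_sub_cancel_left]
      exact hze

lemma nsrt_split {x x'' : X} {s t : List E}
    (h : NonSecretRunTo δ XS x (s ++ t) x'') :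
    ∃ x', NonSecretRunTo δ XS x s x' ∧ NonSecretRunTo δ XS x' t x'' ∧
      (s ≠ [] → x' ∉ XS) := by
  obtain ⟨y, ⟨hy0, hyr⟩, hyn, hye⟩ := h
  simp only [List.length_append] at hye hyn
  refine ⟨y s.length, ⟨y, ⟨hy0, fun j => ?_⟩, fun j hj1 hj2 => hyn j hj1 (by omega), rfl⟩,
    ⟨fun j => y (s.length + j), ⟨by beta_reduce; rw [Nat.add_zero], fun j => ?_⟩,
      fun j hj1 hj2 => by beta_reduce; exact hyn (s.length + j) (by omega) (by omega),
      by beta_reduce; rw [hye]⟩, fun hs => ?_⟩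
  · have hj := j.isLt
    have := hyr ⟨j.val, by simp only [List.length_append]; omega⟩
    have hget : (s ++ t).get ⟨j.val, by simp only [List.length_append]; omega⟩ = s.get j := by
      simp only [List.get_eq_getElem]
      exact List.getElem_append_left hj
    rwa [hget] at this
  · have hj := j.isLt
    have := hyr ⟨s.length + j.val, by simp only [List.length_append]; omega⟩
    have hget : (s ++ t).get ⟨s.length + j.val, by simp only [List.length_append]; omega⟩ = t.get j := by
      simp only [List.get_eq_getElem]
      rw [List.getElem_append_right (by omega)]
      simp
    rw [hget] at this
    beta_reduce
    have e1 : s.length + j.val + 1 = s.length + (j.val + 1) := by omega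
    rwa [e1] at this
  · have h1 : 1 ≤ s.length := by
      rcases s with _ | _
      · exact absurd rfl hs
      · simp
    exact hyn s.length h1 (by omega)


def Rrel (r : Set X) (ω : List E) : Set X :=
  @ite _ (ω = []) (Classical.propDecidable _) r
    {x' | ∃ x ∈ r, x ∉ XS ∧ ∃ s, proj Eo s = ω ∧ NonSecretRunTo δ XS x s x'}

lemma fv_step_set {q r : Set X} (hr : r ⊆ q) (e : E) :
    {x' ∈ oR δ Eo q e | ∃ x ∈ r, (x', false) ∈ SPtrans δ Eo XS (x, false) e}
      = Rrel δ Eo XS r [e] := by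
  ext x'
  simp only [Rrel, if_neg (by simp : ¬([e] : List E) = []), Set.mem_setOf_eq,
    Set.mem_sep_iff]
  constructor
  · rintro ⟨-, x, hx, hsp⟩
    simp only [SPtrans, Set.mem_setOf_eq] at hsp
    obtain ⟨-, h⟩ := hsp
    rcases h with ⟨hxs, hiff⟩ | ⟨-, hff, -⟩
    · exact ⟨x, hx, hxs, hiff.mp trivial⟩
    · exact absurd hff (by simp)
  · rintro ⟨x, hx, hxs, s, hps, hrun⟩
    have hdm : x' ∈ dStr δ x s := nsrt_mem_dStr δ XS hrun
    refine ⟨⟨x, hr hx, s, hdm, hps⟩, x, hx, ?_⟩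
    simp only [SPtrans, Set.mem_setOf_eq]
    refine ⟨⟨x, rfl, s, hdm, hps⟩, Or.inl ⟨hxs, iff_of_true trivial ⟨s, hps, hrun⟩⟩⟩

lemma Rrel_comp (r : Set X) (e : E) (w : List E) :
    Rrel δ Eo XS (Rrel δ Eo XS r [e]) w = Rrel δ Eo XS r (e :: w) := by
  rcases eq_or_ne w [] with rfl | hw
  · simp [Rrel]
  · ext x''
    simp only [Rrel, if_neg hw, if_neg (List.cons_ne_nil e w),
      if_neg (by simp : ¬([e] : List E) = []), Set.mem_setOf_eq]
    constructor
    · rintro ⟨x', ⟨x, hx, hxs, s1, hp1, hr1⟩, hx's, s2, hp2, hr2⟩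
      refine ⟨x, hx, hxs, s1 ++ s2, ?_, nsrt_append δ XS hr1 hr2⟩
      rw [proj_append, hp1, hp2]; rfl
    · rintro ⟨x, hx, hxs, s, hps, hrun⟩
      obtain ⟨a, b, rfl, ha, he, hb⟩ := proj_eq_cons Eo hps
      have hsplit : a ++ e :: b = (a ++ [e]) ++ b := by simp
      rw [hsplit] at hrun
      obtain ⟨x', h1, h2, hns⟩ := nsrt_split δ XS hrun
      refine ⟨x', ⟨x, hx, hxs, a ++ [e], ?_, h1⟩, hns (by simp), b, hb, h2⟩
      rw [proj_append, ha]; simp [proj, he]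

lemma fv_eq : ∀ (ω : List E) (v : Set X × Set X), v.2 ⊆ v.1 →
    fv δ Eo XS v ω = (fobs δ Eo v.1 ω, Rrel δ Eo XS v.2 ω) := by
  intro ω
  induction ω with
  | nil => intro v hv; simp [fv, fobs, Rrel]
  | cons e w ih =>
    intro v hv
    rw [fv]
    have hstep := fv_step_set δ Eo XS hv e
    rw [hstep]
    have hsub : Rrel δ Eo XS v.2 [e] ⊆ oR δ Eo v.1 e := by
      rw [← hstep]; exact Set.sep_subset _ _
    rw [ih (oR δ Eo v.1 e, Rrel δ Eo XS v.2 [e]) hsub]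
    exact Prod.ext rfl (Rrel_comp δ Eo XS v.2 e w)

end Aux
end Opacity

/-- For every observation sequence `ω` in the language of the
verifier, writing `f_v(x_v,0, ω) = (q, r)`: `q` is the observer state
`f_obs(x_obs,0, ω)`, and `r` is the set of states reachable from a non-secret
initial state by a non-secret run over a string projecting to `ω`. -/
theorem verifier_state_characterization
    {X E : Type*} [Finite X] [Finite E]
    (δ : X → E → Set X) (Eo : Set E) (X0 XS : Set X)
    (ω : List E) (h : (fv δ Eo XS (vInit δ Eo X0 XS) ω).1.Nonempty) :
    (fv δ Eo XS (vInit δ Eo X0 XS) ω).1 = fobs δ Eo (UR δ Eo X0) ω ∧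
    (fv δ Eo XS (vInit δ Eo X0 XS) ω).2 =
      {x | ∃ x0 ∈ X0 ∩ XSᶜ, ∃ s : List E,
        proj Eo s = ω ∧ NonSecretRunTo δ XS x0 s x} := by
  have h0 : (vInit δ Eo X0 XS).2
      = {x | ∃ x0 ∈ X0 ∩ XSᶜ, ∃ s : List E, proj Eo s = [] ∧ NonSecretRunTo δ XS x0 s x} := by
    ext x
    simp only [vInit, SPinit, Set.mem_sep_iff, Set.mem_setOf_eq]
    constructor
    · rintro ⟨-, -, hiff⟩
      exact hiff.mp trivial
    · rintro ⟨x0, hx0, s, hps, hrun⟩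
      have hx : x ∈ UR δ Eo X0 := ⟨x0, hx0.1, s, nsrt_mem_dStr δ XS hrun, hps⟩
      exact ⟨hx, hx, iff_of_true trivial ⟨x0, hx0, s, hps, hrun⟩⟩
  have hsub : (vInit δ Eo X0 XS).2 ⊆ (vInit δ Eo X0 XS).1 := Set.sep_subset _ _
  have hmain := fv_eq δ Eo XS ω (vInit δ Eo X0 XS) hsub
  rw [hmain]
  refine ⟨rfl, ?_⟩
  rcases eq_or_ne ω [] with rfl | hω
  · simpa [Rrel] using h0
  · ext x'
    simp only [Rrel, if_neg hω, Set.mem_setOf_eq]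
    constructor
    · rintro ⟨x, hx, hxs, s, hps, hrun⟩
      rw [h0] at hx
      obtain ⟨x0, hx0, t, hpt, hrt⟩ := hx
      refine ⟨x0, hx0, t ++ s, ?_, nsrt_append δ XS hrt hrun⟩
      rw [proj_append, hpt, hps]; rfl
    · rintro ⟨x0, hx0, s, hps, hrun⟩
      refine ⟨x0, ?_, hx0.2, s, hps, hrun⟩
      rw [h0]
      exact ⟨x0, hx0, [], rfl, nsrt_refl δ XS x0⟩
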